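/- Converse direction of the observability characterization: consider the functional $V_\Sigma(0, Z) = \lambda \sum_{t=0}^{T-2} \phi_t(z_{t+1} - A_t z_t) + \sum_{t=0}^{T-1} \psi_t(C_t z_t)$ with $\lambda > 0$ and nonnegative loss functions $\phi_t, \psi_t$ vanishing at zero. If there exists a $\mathcal{K}_\infty$ function $q$ such that $V_\Sigma(0, Z) \geq q(\|z_0\|)$ for all $Z = (z_0, \dots, z_{T-1}) \in \mathbb{R}^{n \times T}$, then the observability matrix $\mathcal{O}_{0,T-1}$ (vertical stacking of $C_0$, $C_1 A_0$, ..., $C_{T-1} A_{T-2} \cdots A_0$) has full column rank $n$. -/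

import Mathlib

def IsKInf (q : ℝ → ℝ) : Prop :=
  ContinuousOn q (Set.Ici 0) ∧ q 0 = 0 ∧ StrictMonoOn q (Set.Ici 0) ∧
    Filter.Tendsto q Filter.atTop Filter.atTop

def prodA (n : ℕ) (A : ℕ → Matrix (Fin n) (Fin n) ℝ) : ℕ → Matrix (Fin n) (Fin n) ℝ
  | 0 => 1
  | t + 1 => A t * prodA n A t

/-! A vector `z` in the kernel of the observability matrix generates the noise-free trajectory
`z_t = prodA n A t *ᵥ z` with zero output, on which the cost vanishes. The lower bound then forces
`q ‖z‖ ≤ 0`, so `z = 0` because a `𝒦∞` function is positive off zero. -/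

theorem IsKInf.pos {q : ℝ → ℝ} (hq : IsKInf q) {s : ℝ} (hs : 0 < s) : 0 < q s := by
  simpa [hq.2.1] using hq.2.2.1 Set.self_mem_Ici hs.le hs

theorem prodA_succ_mulVec (n : ℕ) (A : ℕ → Matrix (Fin n) (Fin n) ℝ) (t : ℕ) (z : Fin n → ℝ) :
    (prodA n A (t + 1)).mulVec z = (A t).mulVec ((prodA n A t).mulVec z) :=
  (Matrix.mulVec_mulVec z (A t) (prodA n A t)).symm

theorem lower_bound_implies_observability_general (n ny T : ℕ)
    (A : ℕ → Matrix (Fin n) (Fin n) ℝ) (C : ℕ → Matrix (Fin ny) (Fin n) ℝ)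
    (lam : ℝ)
    (φ : ℕ → (Fin n → ℝ) → ℝ) (ψ : ℕ → (Fin ny → ℝ) → ℝ)
    (hφ0 : ∀ t, φ t 0 = 0)
    (hψ0 : ∀ t, ψ t 0 = 0)
    (q : ℝ → ℝ) (hq : IsKInf q)
    (hbound : ∀ Z : ℕ → Fin n → ℝ,
      lam * ∑ t ∈ Finset.range (T - 1), φ t (Z (t + 1) - (A t).mulVec (Z t)) +
          ∑ t ∈ Finset.range T, ψ t ((C t).mulVec (Z t)) ≥ q ‖Z 0‖) :
    ∀ z : Fin n → ℝ, (∀ t < T, (C t * prodA n A t).mulVec z = 0) → z = 0 := by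
  intro z hz
  set Z : ℕ → Fin n → ℝ := fun t => (prodA n A t).mulVec z
  have hdynamics : ∀ t, Z (t + 1) - (A t).mulVec (Z t) = 0 := fun t =>
    sub_eq_zero.2 (prodA_succ_mulVec n A t z)
  have houtput : ∀ t < T, (C t).mulVec (Z t) = 0 := fun t ht =>
    (Matrix.mulVec_mulVec z (C t) (prodA n A t)).trans (hz t ht)
  have hcost : lam * ∑ t ∈ Finset.range (T - 1), φ t (Z (t + 1) - (A t).mulVec (Z t)) +
      ∑ t ∈ Finset.range T, ψ t ((C t).mulVec (Z t)) = 0 := by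
    rw [Finset.sum_eq_zero fun t _ => by rw [hdynamics t, hφ0],
      Finset.sum_eq_zero fun t ht => by rw [houtput t (Finset.mem_range.1 ht), hψ0]]
    ring
  have hstart : Z 0 = z := Matrix.one_mulVec z
  have hq_nonpos : q ‖z‖ ≤ 0 := by
    simpa only [hcost, hstart, ge_iff_le] using hbound Z
  by_contra hne
  exact (hq.pos (norm_pos_iff.2 hne)).not_ge hq_nonpos

theorem lower_bound_implies_observability (n ny T : ℕ) (hT : 0 < T)
    (A : ℕ → Matrix (Fin n) (Fin n) ℝ) (C : ℕ → Matrix (Fin ny) (Fin n) ℝ)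
    (lam : ℝ) (hlam : 0 < lam)
    (φ : ℕ → (Fin n → ℝ) → ℝ) (ψ : ℕ → (Fin ny → ℝ) → ℝ)
    (hφnn : ∀ t z, 0 ≤ φ t z) (hφ0 : ∀ t, φ t 0 = 0)
    (hψnn : ∀ t e, 0 ≤ ψ t e) (hψ0 : ∀ t, ψ t 0 = 0)
    (q : ℝ → ℝ) (hq : IsKInf q)
    (hbound : ∀ Z : ℕ → Fin n → ℝ,
      lam * ∑ t ∈ Finset.range (T - 1), φ t (Z (t + 1) - (A t).mulVec (Z t)) +
          ∑ t ∈ Finset.range T, ψ t ((C t).mulVec (Z t)) ≥ q ‖Z 0‖) :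
    ∀ z : Fin n → ℝ, (∀ t < T, (C t * prodA n A t).mulVec z = 0) → z = 0 :=
  lower_bound_implies_observability_general n ny T A C lam φ ψ hφ0 hψ0 q hq hbound
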